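/- arXiv:2306.16881 — 4 statements merged into one kernel-verified Lean document; each statement's English description precedes it below -/
import Mathlib

section
/- Let A ⊆ Ag with |Ag| = k, and let L be the logic with L(α) = {D} for α ∈ A and L(α) = ∅ otherwise. Then a closed formula φ is L-satisfiable if and only if φ ∧ Inv(⋀_{α∈A} ⟨α⟩tt) is K_k^μ-satisfiable. -/
/-- Formulas of the multi-agent modal μ-calculus. -/
inductive Formula (Ag PVar LVar : Type) : Type
  | prop  : PVar → Formula Ag PVar LVar
  | nprop : PVar → Formula Ag PVar LVar
  | tt    : Formula Ag PVar LVar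
  | ff    : Formula Ag PVar LVar
  | var   : LVar → Formula Ag PVar LVar
  | and   : Formula Ag PVar LVar → Formula Ag PVar LVar → Formula Ag PVar LVar
  | or    : Formula Ag PVar LVar → Formula Ag PVar LVar → Formula Ag PVar LVar
  | dia   : Ag → Formula Ag PVar LVar → Formula Ag PVar LVar
  | box   : Ag → Formula Ag PVar LVar → Formula Ag PVar LVar
  | mu    : LVar → Formula Ag PVar LVar → Formula Ag PVar LVar
  | nu    : LVar → Formula Ag PVar LVar → Formula Ag PVar LVar
  deriving DecidableEq

/-- A Kripke model: a nonempty set of states, an accessibility relation per agent,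
and a propositional valuation. -/
structure KModel (Ag PVar : Type) where
  W : Type
  h_ne : Nonempty W
  R : Ag → W → W → Prop
  V : W → Set PVar

variable {Ag PVar LVar : Type}

/-- The μ-calculus semantics of a formula relative to an environment. -/
def Formula.sem [DecidableEq LVar] (M : KModel Ag PVar) :
    Formula Ag PVar LVar → (LVar → Set M.W) → Set M.W
  | .prop p, _ => {s | p ∈ M.V s}
  | .nprop p, _ => {s | p ∉ M.V s}
  | .tt, _ => Set.univ
  | .ff, _ => ∅
  | .var X, ρ => ρ X
  | .and φ ψ, ρ => Formula.sem M φ ρ ∩ Formula.sem M ψ ρ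
  | .or φ ψ, ρ => Formula.sem M φ ρ ∪ Formula.sem M ψ ρ
  | .box a φ, ρ => {s | ∀ t, M.R a s t → t ∈ Formula.sem M φ ρ}
  | .dia a φ, ρ => {s | ∃ t, M.R a s t ∧ t ∈ Formula.sem M φ ρ}
  | .mu X φ, ρ => ⋂₀ {S | Formula.sem M φ (Function.update ρ X S) ⊆ S}
  | .nu X φ, ρ => ⋃₀ {S | S ⊆ Formula.sem M φ (Function.update ρ X S)}

/-- Free recursion variables of a formula. -/
def Formula.freeVars : Formula Ag PVar LVar → Set LVar
  | .var X => {X}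
  | .and φ ψ => Formula.freeVars φ ∪ Formula.freeVars ψ
  | .or φ ψ => Formula.freeVars φ ∪ Formula.freeVars ψ
  | .dia _ φ => Formula.freeVars φ
  | .box _ φ => Formula.freeVars φ
  | .mu X φ => Formula.freeVars φ \ {X}
  | .nu X φ => Formula.freeVars φ \ {X}
  | _ => ∅

/-- A formula is closed when it has no free recursion variables. -/
def Formula.Closed (φ : Formula Ag PVar LVar) : Prop := φ.freeVars = ∅

/-- Frame conditions D (serial), T (reflexive), B (symmetric), 4 (transitive), 5 (euclidean). -/
inductive FrameCond : Type
  | D | T | B | four | five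
  deriving DecidableEq

/-- A binary relation `R` satisfies a frame condition. -/
def SatisfiesCond {W : Type} (R : W → W → Prop) : FrameCond → Prop
  | .D => ∀ s, ∃ t, R s t
  | .T => ∀ s, R s s
  | .B => ∀ s t, R s t → R t s
  | .four => ∀ s t u, R s t → R t u → R s u
  | .five => ∀ s t u, R s t → R s u → R t u

/-- A logic assigns a set of frame conditions to each agent;
a model is an L-model when each agent's relation satisfies the agent's conditions. -/
def IsLModel (L : Ag → Set FrameCond) (M : KModel Ag PVar) : Prop :=
  ∀ a : Ag, ∀ c ∈ L a, SatisfiesCond (M.R a) c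

/-- A formula is L-satisfiable when it holds at some state of some L-model. -/
def LSatisfiable [DecidableEq LVar] (L : Ag → Set FrameCond)
    (φ : Formula Ag PVar LVar) : Prop :=
  ∃ (M : KModel Ag PVar), IsLModel L M ∧
    ∃ (w : M.W) (ρ : LVar → Set M.W), w ∈ Formula.sem M φ ρ

/-- Finite conjunction of a list of formulas (empty conjunction is tt). -/
def bigAnd : List (Formula Ag PVar LVar) → Formula Ag PVar LVar
  | [] => .tt
  | φ :: l => .and φ (bigAnd l)

/-- Syntactic negation, defined by the usual dualities. -/
def Formula.neg : Formula Ag PVar LVar → Formula Ag PVar LVar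
  | .prop p => .nprop p
  | .nprop p => .prop p
  | .tt => .ff
  | .ff => .tt
  | .var X => .var X
  | .and φ ψ => .or (Formula.neg φ) (Formula.neg ψ)
  | .or φ ψ => .and (Formula.neg φ) (Formula.neg ψ)
  | .dia a φ => .box a (Formula.neg φ)
  | .box a φ => .dia a (Formula.neg φ)
  | .mu X φ => .nu X (Formula.neg φ)
  | .nu X φ => .mu X (Formula.neg φ)

/-- Implication φ → ψ, encoded as ¬φ ∨ ψ. -/
def Formula.impl (φ ψ : Formula Ag PVar LVar) : Formula Ag PVar LVar := .or φ.neg ψ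

/-- All variables (free or bound) occurring in a formula. -/
def Formula.vars : Formula Ag PVar LVar → Set LVar
  | .var X => {X}
  | .and φ ψ => Formula.vars φ ∪ Formula.vars ψ
  | .or φ ψ => Formula.vars φ ∪ Formula.vars ψ
  | .dia _ φ => Formula.vars φ
  | .box _ φ => Formula.vars φ
  | .mu X φ => insert X (Formula.vars φ)
  | .nu X φ => insert X (Formula.vars φ)
  | _ => ∅

/-- [Ag]φ = ⋀_{α ∈ Ag} [α]φ. -/
noncomputable def boxAg [Fintype Ag] (φ : Formula Ag PVar LVar) : Formula Ag PVar LVar :=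
  bigAnd ((Finset.univ : Finset Ag).toList.map (fun a => Formula.box a φ))

/-- Inv(φ) = νX.(φ ∧ [Ag]X), for the given (fresh) variable X. -/
noncomputable def InvF [Fintype Ag] (X : LVar) (φ : Formula Ag PVar LVar) :
    Formula Ag PVar LVar :=
  .nu X (.and φ (boxAg (.var X)))

/-! The forward direction takes the invariant to be the whole model. Conversely, the greatest fixpoint
`Inv(⋀_{α∈A} ⟨α⟩tt)` holds at `w` exactly when some set `S ∋ w` closed under every relation makes all
agents in `A` serial; the submodel generated on `S` is then an `L`-model, and it still satisfies `φ`
because μ-calculus semantics is invariant under generated submodels. -/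

namespace KModel

variable (M : KModel Ag PVar)

def SuccClosed (S : Set M.W) : Prop :=
  ∀ a, ∀ s ∈ S, ∀ t, M.R a s t → t ∈ S

abbrev restrict (S : Set M.W) (hS : S.Nonempty) : KModel Ag PVar where
  W := S
  h_ne := hS.to_subtype
  R a s t := M.R a s t
  V s := M.V s

variable {M}

lemma preimage_val_image_union_compl {S : Set M.W} (T : Set S) :
    ((↑) : S → M.W) ⁻¹' (((↑) '' T) ∪ Sᶜ) = T := by
  rw [Set.preimage_union, Set.preimage_image_eq _ Subtype.val_injective,
    Subtype.preimage_coe_compl, Set.union_empty]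

variable [DecidableEq LVar] {S : Set M.W} (hS : S.Nonempty)

lemma sem_restrict_mu {φ : Formula Ag PVar LVar}
    (ih : ∀ ρ, φ.sem (M.restrict S hS) (Set.preimage (↑) ∘ ρ) = (↑) ⁻¹' φ.sem M ρ)
    (Y : LVar) (ρ : LVar → Set M.W) :
    (Formula.mu Y φ).sem (M.restrict S hS) (Set.preimage (↑) ∘ ρ) =
      (↑) ⁻¹' (Formula.mu Y φ).sem M ρ := by
  ext s
  simp only [Formula.sem, Set.mem_preimage, Set.mem_sInter, Set.mem_ofPred_eq]
  constructor
  · intro hs T hT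
    refine hs (Subtype.val ⁻¹' T) ?_
    rw [← Function.comp_update, ih]
    exact Set.preimage_mono hT
  · -- A prefixpoint `T` of the submodel extends to the prefixpoint `T ∪ Sᶜ` of `M`.
    intro hs T hT
    rw [← preimage_val_image_union_compl T]
    refine hs _ fun w hw => ?_
    by_cases hwS : w ∈ S
    · have hw' : (⟨w, hwS⟩ : S) ∈ (↑) ⁻¹' φ.sem M (Function.update ρ Y (((↑) '' T) ∪ Sᶜ)) := hw
      rw [← ih, Function.comp_update, preimage_val_image_union_compl] at hw'
      exact Or.inl ⟨_, hT hw', rfl⟩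
    · exact Or.inr hwS

lemma sem_restrict_nu {φ : Formula Ag PVar LVar}
    (ih : ∀ ρ, φ.sem (M.restrict S hS) (Set.preimage (↑) ∘ ρ) = (↑) ⁻¹' φ.sem M ρ)
    (Y : LVar) (ρ : LVar → Set M.W) :
    (Formula.nu Y φ).sem (M.restrict S hS) (Set.preimage (↑) ∘ ρ) =
      (↑) ⁻¹' (Formula.nu Y φ).sem M ρ := by
  ext s
  simp only [Formula.sem, Set.mem_preimage, Set.mem_sUnion, Set.mem_ofPred_eq]
  constructor
  · rintro ⟨T, hT, hsT⟩
    refine ⟨(↑) '' T, ?_, s, hsT, rfl⟩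
    rintro _ ⟨t, htT, rfl⟩
    have ht := hT htT
    rwa [← Set.preimage_image_eq T Subtype.val_injective, ← Function.comp_update, ih] at ht
  · rintro ⟨T, hT, hsT⟩
    refine ⟨Subtype.val ⁻¹' T, ?_, hsT⟩
    rw [← Function.comp_update, ih]
    exact Set.preimage_mono hT

lemma sem_restrict (hcl : M.SuccClosed S) (φ : Formula Ag PVar LVar) (ρ : LVar → Set M.W) :
    φ.sem (M.restrict S hS) (Set.preimage (↑) ∘ ρ) = (↑) ⁻¹' φ.sem M ρ := by
  induction φ generalizing ρ with
  | prop | nprop | tt | ff | var => rfl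
  | and φ ψ ihφ ihψ => simp only [Formula.sem, ihφ, ihψ, Set.preimage_inter]
  | or φ ψ ihφ ihψ => simp only [Formula.sem, ihφ, ihψ, Set.preimage_union]
  | box a φ ih =>
    ext s
    simp only [Formula.sem, ih, Set.mem_preimage, Set.mem_ofPred_eq]
    exact ⟨fun h t hR => h ⟨t, hcl a s s.2 t hR⟩ hR, fun h t hR => h t hR⟩
  | dia a φ ih =>
    ext s
    simp only [Formula.sem, ih, Set.mem_preimage, Set.mem_ofPred_eq]
    exact ⟨fun ⟨t, hR, ht⟩ => ⟨t, hR, ht⟩, fun ⟨t, hR, ht⟩ => ⟨⟨t, hcl a s s.2 t hR⟩, hR, ht⟩⟩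
  | mu Y φ ih => exact sem_restrict_mu hS ih Y ρ
  | nu Y φ ih => exact sem_restrict_nu hS ih Y ρ

end KModel

section Semantics

variable [DecidableEq LVar] (M : KModel Ag PVar) (ρ : LVar → Set M.W) (s : M.W)

lemma mem_sem_bigAnd (l : List (Formula Ag PVar LVar)) :
    s ∈ (bigAnd l).sem M ρ ↔ ∀ φ ∈ l, s ∈ φ.sem M ρ := by
  induction l with
  | nil => simp [bigAnd, Formula.sem]
  | cons φ l ih => simp [bigAnd, Formula.sem, ih]

lemma mem_sem_boxAg [Fintype Ag] (φ : Formula Ag PVar LVar) :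
    s ∈ (boxAg φ).sem M ρ ↔ ∀ a t, M.R a s t → t ∈ φ.sem M ρ := by
  simp [boxAg, mem_sem_bigAnd, Formula.sem]

lemma mem_sem_bigAnd_dia_tt (A : Finset Ag) :
    s ∈ (bigAnd (A.toList.map fun a => Formula.dia a .tt) : Formula Ag PVar LVar).sem M ρ ↔
      ∀ a ∈ A, ∃ t, M.R a s t := by
  simp [mem_sem_bigAnd, Formula.sem]

lemma mem_sem_InvF [Fintype Ag] (X : LVar) (ψ : Formula Ag PVar LVar) :
    s ∈ (InvF X ψ).sem M ρ ↔
      ∃ S, s ∈ S ∧ (∀ t ∈ S, t ∈ ψ.sem M (Function.update ρ X S)) ∧ M.SuccClosed S := by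
  simp only [InvF, Formula.sem, Set.mem_sUnion, Set.mem_ofPred_eq, KModel.SuccClosed]
  constructor
  · rintro ⟨S, hS, hsS⟩
    refine ⟨S, hsS, fun t ht => (hS ht).1, fun a t ht u hR => ?_⟩
    simpa [Formula.sem] using (mem_sem_boxAg M _ t _).1 (hS ht).2 a u hR
  · rintro ⟨S, hsS, hψ, hcl⟩
    refine ⟨S, fun t ht => ⟨hψ t ht, (mem_sem_boxAg M _ t _).2 fun a u hR => ?_⟩, hsS⟩
    simpa [Formula.sem] using hcl a t ht u hR

end Semantics

lemma isLModel_iff_serial {A : Finset Ag} {L : Ag → Set FrameCond}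
    (hLA : ∀ a ∈ A, L a = {FrameCond.D}) (hLA' : ∀ a ∉ A, L a = ∅) (M : KModel Ag PVar) :
    IsLModel L M ↔ ∀ a ∈ A, ∀ s, ∃ t, M.R a s t := by
  refine ⟨fun hM a ha => hM a .D (by simp [hLA a ha]), fun hser a c hc => ?_⟩
  by_cases ha : a ∈ A
  · rw [hLA a ha, Set.mem_singleton_iff] at hc
    exact hc ▸ hser a ha
  · simp [hLA' a ha] at hc

lemma isLModel_empty (M : KModel Ag PVar) : IsLModel (fun _ => ∅) M :=
  fun _ _ hc => hc.elim

theorem seriality_translation_correct_general [Fintype Ag] [DecidableEq LVar]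
    (A : Finset Ag) (L : Ag → Set FrameCond)
    (hLA : ∀ a ∈ A, L a = {FrameCond.D})
    (hLA' : ∀ a ∉ A, L a = (∅ : Set FrameCond))
    (φ : Formula Ag PVar LVar)
    (X : LVar) :
    LSatisfiable L φ ↔
      LSatisfiable (fun _ => (∅ : Set FrameCond))
        (.and φ (InvF X (bigAnd (A.toList.map (fun a => Formula.dia a Formula.tt))))) := by
  simp only [LSatisfiable, Formula.sem, Set.mem_inter_iff, mem_sem_InvF, mem_sem_bigAnd_dia_tt,
    isLModel_iff_serial hLA hLA', isLModel_empty, true_and]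
  constructor
  · rintro ⟨M, hser, w, ρ, hw⟩
    exact ⟨M, w, ρ, hw, Set.univ, trivial, fun t _ a ha => hser a ha t,
      fun _ _ _ _ _ => trivial⟩
  · rintro ⟨M, w, ρ, hw, S, hwS, hser, hcl⟩
    refine ⟨M.restrict S ⟨w, hwS⟩, fun a ha s => ?_, ⟨w, hwS⟩, Set.preimage (↑) ∘ ρ,
      (M.sem_restrict ⟨w, hwS⟩ hcl φ ρ).symm ▸ hw⟩
    obtain ⟨t, hR⟩ := hser s s.2 a ha
    exact ⟨⟨t, hcl a s s.2 t hR⟩, hR⟩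

/-- φ is L-satisfiable (L giving condition D exactly to the agents in A)
iff φ ∧ Inv(⋀_{α∈A}⟨α⟩tt) is satisfiable over arbitrary frames (K_k^μ). -/
theorem seriality_translation_correct [Fintype Ag] [Nonempty Ag] [DecidableEq LVar]
    (A : Finset Ag) (L : Ag → Set FrameCond)
    (hLA : ∀ a ∈ A, L a = {FrameCond.D})
    (hLA' : ∀ a ∉ A, L a = (∅ : Set FrameCond))
    (φ : Formula Ag PVar LVar) (hc : φ.Closed)
    (X : LVar) (hX : X ∉ φ.vars) :
    LSatisfiable L φ ↔
      LSatisfiable (fun _ => (∅ : Set FrameCond))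
        (.and φ (InvF X (bigAnd (A.toList.map (fun a => Formula.dia a Formula.tt))))) :=
  seriality_translation_correct_general A L hLA hLA' φ X
end

section
/- Let A ⊆ Ag and let L1, L2 be logics such that L1(α) = L2(α) + T for α ∈ A and L1(α) = L2(α) otherwise, where each L2(α) includes at most the frame conditions D and B. Let t^T_A be the translation defined homomorphically on all formula constructors except, for α ∈ A: t^T_A([α]φ) = [α]t^T_A(φ) ∧ t^T_A(φ) and t^T_A(⟨α⟩φ) = ⟨α⟩t^T_A(φ) ∨ t^T_A(φ). Then a closed formula φ is L1-satisfiable if and only if t^T_A(φ) is L2-satisfiable. -/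
variable {Ag PVar LVar : Type}

/-- The reflexivity translation t^T_A: homomorphic except on modalities of agents in A. -/
def tT [DecidableEq Ag] (A : Finset Ag) : Formula Ag PVar LVar → Formula Ag PVar LVar
  | .box a φ =>
      if a ∈ A then .and (.box a (tT A φ)) (tT A φ) else .box a (tT A φ)
  | .dia a φ =>
      if a ∈ A then .or (.dia a (tT A φ)) (tT A φ) else .dia a (tT A φ)
  | .and φ ψ => .and (tT A φ) (tT A ψ)
  | .or φ ψ => .or (tT A φ) (tT A ψ)
  | .mu X φ => .mu X (tT A φ)
  | .nu X φ => .nu X (tT A φ)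
  | φ => φ


/-!
Adding a loop at every state for each agent of `A` preserves seriality and symmetry and makes
those agents reflexive, so it turns an `L2`-model `M` into an `L1`-model. In this reflexive closure
`[α]φ` holds exactly where `[α]φ ∧ φ` holds in `M`, and `⟨α⟩φ` exactly where `⟨α⟩φ ∨ φ` does; hence
`φ` holds in the closure exactly where its translation holds in `M`. An `L1`-model is already its
own reflexive closure, which gives the converse.
-/

theorem SatisfiesCond.reflGen {W : Type} {R : W → W → Prop} {c : FrameCond} (P : Prop)
    (hc : c ≠ .five) (h : SatisfiesCond R c) :
    SatisfiesCond (fun s t => R s t ∨ (P ∧ s = t)) c := by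
  cases c with
  | D => exact fun s => (h s).imp fun _ => Or.inl
  | T => exact fun s => Or.inl (h s)
  | B =>
    rintro s t (hst | ⟨hP, rfl⟩)
    exacts [Or.inl (h s t hst), Or.inr ⟨hP, rfl⟩]
  | four =>
    rintro s t u (hst | ⟨hP, rfl⟩) (htu | ⟨-, rfl⟩)
    exacts [Or.inl (h s t u hst htu), Or.inl hst, Or.inl htu, Or.inr ⟨hP, rfl⟩]
  | five => exact absurd rfl hc

namespace KModel

abbrev reflClosure (A : Set Ag) (M : KModel Ag PVar) : KModel Ag PVar where
  W := M.W
  h_ne := M.h_ne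
  R a s t := M.R a s t ∨ (a ∈ A ∧ s = t)
  V := M.V

theorem reflClosure_R_eq_self {A : Set Ag} {M : KModel Ag PVar}
    (h : ∀ a ∈ A, ∀ s, M.R a s s) : (M.reflClosure A).R = M.R := by
  ext a s t
  exact ⟨by rintro (hst | ⟨ha, rfl⟩); exacts [hst, h a ha s], Or.inl⟩

end KModel

section

theorem IsLModel.of_le {L L' : Ag → Set FrameCond} {M : KModel Ag PVar} (hM : IsLModel L' M)
    (h : L ≤ L') : IsLModel L M :=
  fun a c hc => hM a c (h a hc)

theorem IsLModel.reflClosure {A : Set Ag} {L L' : Ag → Set FrameCond} {M : KModel Ag PVar}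
    (hM : IsLModel L M) (hfive : ∀ a, .five ∉ L a)
    (hA : ∀ a ∈ A, L' a = L a ∪ {.T}) (hA' : ∀ a ∉ A, L' a = L a) :
    IsLModel L' (M.reflClosure A) := by
  intro a c hc
  by_cases ha : a ∈ A
  · rw [hA a ha] at hc
    rcases hc with hc | rfl
    · exact (hM a c hc).reflGen _ (ne_of_mem_of_not_mem hc (hfive a))
    · exact fun s => Or.inr ⟨ha, rfl⟩
  · rw [hA' a ha] at hc
    exact (hM a c hc).reflGen _ (ne_of_mem_of_not_mem hc (hfive a))

variable [DecidableEq LVar]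

theorem sem_reflClosure_of_refl {A : Set Ag} {M : KModel Ag PVar} (h : ∀ a ∈ A, ∀ s, M.R a s s)
    (φ : Formula Ag PVar LVar) (ρ : LVar → Set M.W) :
    φ.sem (M.reflClosure A) ρ = φ.sem M ρ := by
  -- `M.reflClosure A` differs from `M` only in the relation field; `M` is its own eta expansion.
  show φ.sem ⟨M.W, M.h_ne, (M.reflClosure A).R, M.V⟩ ρ = _
  rw [KModel.reflClosure_R_eq_self h]

variable [DecidableEq Ag]

theorem sem_reflClosure_eq_sem_tT (A : Finset Ag) (M : KModel Ag PVar)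
    (φ : Formula Ag PVar LVar) (ρ : LVar → Set M.W) :
    φ.sem (M.reflClosure A) ρ = (tT A φ).sem M ρ := by
  induction φ generalizing ρ with
  | box a φ ih =>
    ext s
    by_cases ha : a ∈ A <;> simp [tT, ha, Formula.sem, ← ih, or_imp, forall_and]
  | dia a φ ih =>
    ext s
    by_cases ha : a ∈ A <;> simp [tT, ha, Formula.sem, ← ih, or_and_right, exists_or]
  | and φ ψ ih₁ ih₂ => simp only [tT, Formula.sem, ih₁, ih₂]
  | or φ ψ ih₁ ih₂ => simp only [tT, Formula.sem, ih₁, ih₂]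
  | mu X φ ih => simp only [tT, Formula.sem, ← ih]
  | nu X φ ih => simp only [tT, Formula.sem, ← ih]
  | _ => rfl

end

theorem reflexivity_translation_correct_general [DecidableEq Ag] [DecidableEq LVar]
    (A : Finset Ag) (L1 L2 : Ag → Set FrameCond)
    (hA : ∀ a ∈ A, L1 a = L2 a ∪ {FrameCond.T})
    (hA' : ∀ a ∉ A, L1 a = L2 a)
    (hL2 : ∀ a : Ag, L2 a ⊆ {FrameCond.D, FrameCond.B})
    (φ : Formula Ag PVar LVar) :
    LSatisfiable L1 φ ↔ LSatisfiable L2 (tT A φ) := by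
  constructor
  · rintro ⟨M, hM, w, ρ, hw⟩
    have hrefl : ∀ a ∈ (A : Set Ag), ∀ s, M.R a s s := fun a ha => hM a .T (by simp [hA a ha])
    have hL : L2 ≤ L1 := fun a => by
      by_cases ha : a ∈ A
      · exact (hA a ha).ge.trans' Set.subset_union_left
      · exact (hA' a ha).ge
    refine ⟨M, hM.of_le hL, w, ρ, ?_⟩
    rwa [← sem_reflClosure_eq_sem_tT, sem_reflClosure_of_refl hrefl]
  · rintro ⟨M, hM, w, ρ, hw⟩
    have hfive : ∀ a, .five ∉ L2 a := fun a h => by simpa using hL2 a h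
    exact ⟨M.reflClosure A, hM.reflClosure hfive hA hA', w, ρ, by rwa [sem_reflClosure_eq_sem_tT]⟩

/-- correctness of the reflexivity translation. -/
theorem reflexivity_translation_correct [DecidableEq Ag] [DecidableEq LVar]
    (A : Finset Ag) (L1 L2 : Ag → Set FrameCond)
    (hA : ∀ a ∈ A, L1 a = L2 a ∪ {FrameCond.T})
    (hA' : ∀ a ∉ A, L1 a = L2 a)
    (hL2 : ∀ a : Ag, L2 a ⊆ {FrameCond.D, FrameCond.B})
    (φ : Formula Ag PVar LVar) (hc : φ.Closed) :
    LSatisfiable L1 φ ↔ LSatisfiable L2 (tT A φ) :=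
  reflexivity_translation_correct_general A L1 L2 hA hA' hL2 φ
end

section
/- Let L be a logic and M an L-model with state w. Then the pointed model obtained from the tree unfolding (M', w) of (M, w) by replacing each relation R'_α with its closure under the frame conditions in L(α) (applied in the order D, T, B, 4, 5) is bisimilar to (M, w). -/
variable {Ag PVar : Type}

/-- `S` is a bisimulation between two Kripke models. -/
def IsBisim (M1 M2 : KModel Ag PVar) (S : M1.W → M2.W → Prop) : Prop :=
  ∀ s1 s2, S s1 s2 →
    (∀ (a : Ag) (s1' : M1.W), M1.R a s1 s1' → ∃ s2', M2.R a s2 s2' ∧ S s1' s2') ∧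
    (∀ (a : Ag) (s2' : M2.W), M2.R a s2 s2' → ∃ s1', M1.R a s1 s1' ∧ S s1' s2') ∧
    M1.V s1 = M2.V s2

/-- Two pointed models are bisimilar when some bisimulation relates their points. -/
def Bisimilar (M1 : KModel Ag PVar) (s1 : M1.W) (M2 : KModel Ag PVar) (s2 : M2.W) : Prop :=
  ∃ S : M1.W → M2.W → Prop, IsBisim M1 M2 S ∧ S s1 s2

/-- The final state of the path w0 α1 w1 ⋯ αn wn. -/
def lastState (M : KModel Ag PVar) : M.W → List (Ag × M.W) → M.W
  | w, [] => w
  | _, (_, v) :: l => lastState M v l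

/-- Validity of a path: w0 α1 w1 ⋯ αn wn with wi R_{α_{i+1}} w_{i+1} throughout. -/
def ValidPath (M : KModel Ag PVar) : M.W → List (Ag × M.W) → Prop
  | _, [] => True
  | w, (a, v) :: l => M.R a w v ∧ ValidPath M v l

/-- The tree unfolding of the pointed model (M, w0): states are the finite
R-paths from w0, a path is α-related to its one-step α-extensions, and a path
is valuated by its final state. -/
def unfolding (M : KModel Ag PVar) (w0 : M.W) : KModel Ag PVar where
  W := { l : List (Ag × M.W) // ValidPath M w0 l }
  h_ne := ⟨⟨[], trivial⟩⟩
  R := fun a u v => ∃ w : M.W, v.1 = u.1 ++ [(a, w)]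
  V := fun u => M.V (lastState M w0 u.1)

/-- The root of the tree unfolding: the empty path. -/
def unfoldRoot (M : KModel Ag PVar) (w0 : M.W) : (unfolding M w0).W :=
  ⟨[], trivial⟩
/-- The least euclidean relation containing `R`. -/
inductive EuclClosure {W : Type} (R : W → W → Prop) : W → W → Prop
  | base {s t : W} : R s t → EuclClosure R s t
  | eucl {s t u : W} : EuclClosure R s t → EuclClosure R s u → EuclClosure R t u

/-- The closure of a relation under a single frame condition. -/
def closureUnder {W : Type} : FrameCond → (W → W → Prop) → (W → W → Prop)
  | .D, R => fun s t => R s t ∨ (s = t ∧ ∀ u, ¬ R s u)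
  | .T, R => fun s t => R s t ∨ s = t
  | .B, R => fun s t => R s t ∨ R t s
  | .four, R => Relation.TransGen R
  | .five, R => EuclClosure R

open Classical in
/-- The closure of a relation under a set of frame conditions, applied in the
order D, T, B, 4, 5. -/
noncomputable def logicClosure {W : Type} (C : Set FrameCond) (R : W → W → Prop) :
    W → W → Prop :=
  let R1 := if FrameCond.D ∈ C then closureUnder FrameCond.D R else R
  let R2 := if FrameCond.T ∈ C then closureUnder FrameCond.T R1 else R1
  let R3 := if FrameCond.B ∈ C then closureUnder FrameCond.B R2 else R2
  let R4 := if FrameCond.four ∈ C then closureUnder FrameCond.four R3 else R3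
  if FrameCond.five ∈ C then closureUnder FrameCond.five R4 else R4

/-- The tree unfolding with each agent's relation replaced by its closure
under the frame conditions of L for that agent. -/
noncomputable def closedUnfolding (L : Ag → Set FrameCond) (M : KModel Ag PVar)
    (w0 : M.W) : KModel Ag PVar where
  W := (unfolding M w0).W
  h_ne := (unfolding M w0).h_ne
  R := fun a => logicClosure (L a) ((unfolding M w0).R a)
  V := (unfolding M w0).V

/-- The root of the closed unfolding: the empty path. -/
noncomputable def closedUnfoldRoot (L : Ag → Set FrameCond) (M : KModel Ag PVar)
    (w0 : M.W) : (closedUnfolding L M w0).W :=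
  ⟨[], trivial⟩

/-! The bisimulation relates a path of the unfolding to its final state. Every closure step
adds only pairs whose final states are already related in `M`: the pullback of `M.R α` along
"final state" inherits T, B, 4 and 5 from `M.R α`, and the D-step adds nothing because the
unfolding of a serial relation is serial. Conversely, every `M`-successor of a final state is
reached by a one-step extension of the path, which lies in the unclosed relation already. -/

section RelationClosure

variable {W : Type} {R Q : W → W → Prop}

theorem le_closureUnder (c : FrameCond) : R ≤ closureUnder c R := by
  intro s t h
  cases c
  exacts [Or.inl h, Or.inl h, Or.inl h, Relation.TransGen.single h, EuclClosure.base h]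

theorem closureUnder_le {c : FrameCond} (hc : c ≠ .D) (hRQ : R ≤ Q)
    (hQ : SatisfiesCond Q c) : closureUnder c R ≤ Q := by
  intro s t h
  cases c with
  | D => exact absurd rfl hc
  | T => exact h.elim (hRQ s t) fun hst => hst ▸ hQ s
  | B => exact h.elim (hRQ s t) fun hts => hQ t s (hRQ t s hts)
  | four =>
    induction h with
    | single h => exact hRQ _ _ h
    | tail _ h ih => exact hQ _ _ _ ih (hRQ _ _ h)
  | five =>
    induction h with
    | base h => exact hRQ _ _ h
    | eucl _ _ ih₁ ih₂ => exact hQ _ _ _ ih₁ ih₂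

theorem closureUnder_D_of_serial (hR : SatisfiesCond R .D) : closureUnder .D R = R := by
  ext s t
  refine ⟨fun h => h.elim id fun ⟨_, hdead⟩ => ?_, Or.inl⟩
  obtain ⟨u, hu⟩ := hR s
  exact absurd hu (hdead u)

open Classical in
noncomputable def closureStep (C : Set FrameCond) (c : FrameCond) (R : W → W → Prop) :
    W → W → Prop :=
  if c ∈ C then closureUnder c R else R

theorem logicClosure_eq_closureStep (C : Set FrameCond) (R : W → W → Prop) :
    logicClosure C R = closureStep C .five (closureStep C .four (closureStep C .B
      (closureStep C .T (closureStep C .D R)))) :=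
  rfl

theorem le_closureStep (C : Set FrameCond) (c : FrameCond) : R ≤ closureStep C c R := by
  unfold closureStep
  split_ifs
  exacts [le_closureUnder c, le_rfl]

theorem closureStep_le {C : Set FrameCond} {c : FrameCond} (hc : c ≠ .D) (hRQ : R ≤ Q)
    (hQ : c ∈ C → SatisfiesCond Q c) : closureStep C c R ≤ Q := by
  unfold closureStep
  split_ifs with hcC
  exacts [closureUnder_le hc hRQ (hQ hcC), hRQ]

theorem closureStep_D_le {C : Set FrameCond} (hRQ : R ≤ Q)
    (hR : FrameCond.D ∈ C → SatisfiesCond R .D) : closureStep C .D R ≤ Q := by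
  unfold closureStep
  split_ifs with hD
  exacts [(closureUnder_D_of_serial (hR hD)).le.trans hRQ, hRQ]

theorem le_logicClosure (C : Set FrameCond) : R ≤ logicClosure C R := by
  rw [logicClosure_eq_closureStep]
  exact (le_closureStep C _).trans <| (le_closureStep C _).trans <| (le_closureStep C _).trans <|
    (le_closureStep C _).trans (le_closureStep C _)

theorem logicClosure_le {C : Set FrameCond} (hRQ : R ≤ Q)
    (hR : FrameCond.D ∈ C → SatisfiesCond R .D)
    (hQ : ∀ c ∈ C, c ≠ .D → SatisfiesCond Q c) : logicClosure C R ≤ Q := by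
  rw [logicClosure_eq_closureStep]
  refine closureStep_le (by decide) ?_ fun hc => hQ _ hc (by decide)
  refine closureStep_le (by decide) ?_ fun hc => hQ _ hc (by decide)
  refine closureStep_le (by decide) ?_ fun hc => hQ _ hc (by decide)
  exact closureStep_le (by decide) (closureStep_D_le hRQ hR) fun hc => hQ _ hc (by decide)

theorem SatisfiesCond.invImage {V : Type} {c : FrameCond} (hc : c ≠ .D)
    (hR : SatisfiesCond R c) (f : V → W) : SatisfiesCond (InvImage R f) c := by
  cases c with
  | D => exact absurd rfl hc
  | T => exact fun s => hR (f s)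
  | B => exact fun s t => hR (f s) (f t)
  | four => exact fun s t u => hR (f s) (f t) (f u)
  | five => exact fun s t u => hR (f s) (f t) (f u)

end RelationClosure

section Unfolding

variable (M : KModel Ag PVar)

theorem lastState_append_singleton (w v : M.W) (a : Ag) (l : List (Ag × M.W)) :
    lastState M w (l ++ [(a, v)]) = v := by
  induction l generalizing w with
  | nil => rfl
  | cons h t ih => exact ih h.2

theorem validPath_append_singleton_iff {w v : M.W} {a : Ag} {l : List (Ag × M.W)} :
    ValidPath M w (l ++ [(a, v)]) ↔ ValidPath M w l ∧ M.R a (lastState M w l) v := by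
  induction l generalizing w with
  | nil => simp [ValidPath, lastState]
  | cons h t ih => simp only [List.cons_append, ValidPath, lastState, ih, and_assoc]

variable {M} {w : M.W}

def extendPath (u : (unfolding M w).W) {a : Ag} {t : M.W} (ht : M.R a (lastState M w u.1) t) :
    (unfolding M w).W :=
  ⟨u.1 ++ [(a, t)], (validPath_append_singleton_iff M).2 ⟨u.2, ht⟩⟩

theorem unfolding_R_extendPath (u : (unfolding M w).W) {a : Ag} {t : M.W}
    (ht : M.R a (lastState M w u.1) t) : (unfolding M w).R a u (extendPath u ht) :=
  ⟨t, rfl⟩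

theorem lastState_extendPath (u : (unfolding M w).W) {a : Ag} {t : M.W}
    (ht : M.R a (lastState M w u.1) t) : lastState M w (extendPath u ht).1 = t :=
  lastState_append_singleton M w t a u.1

theorem unfolding_R_le_invImage (a : Ag) :
    (unfolding M w).R a ≤ InvImage (M.R a) fun u => lastState M w u.1 := by
  rintro u ⟨_, hv⟩ ⟨t, rfl⟩
  show M.R a _ (lastState M w (u.1 ++ [(a, t)]))
  rw [lastState_append_singleton]
  exact ((validPath_append_singleton_iff M).1 hv).2

theorem SatisfiesCond.unfolding_serial {a : Ag} (hR : SatisfiesCond (M.R a) .D) :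
    SatisfiesCond ((unfolding M w).R a) .D := fun u =>
  let ⟨_, ht⟩ := hR (lastState M w u.1)
  ⟨extendPath u ht, unfolding_R_extendPath u ht⟩

end Unfolding

/-- for an L-model M, the L-closure of the tree unfolding of
(M, w) is bisimilar to (M, w). -/
theorem closed_unfolding_bisimilar (L : Ag → Set FrameCond) (M : KModel Ag PVar)
    (hM : IsLModel L M) (w : M.W) :
    Bisimilar (closedUnfolding L M w) (closedUnfoldRoot L M w) M w := by
  refine ⟨fun u s => lastState M w u.1 = s, ?_, rfl⟩
  rintro u _ rfl
  refine ⟨fun a v hv => ⟨_, ?forth, rfl⟩,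
    fun a t ht => ⟨extendPath u ht, ?back, lastState_extendPath u ht⟩, rfl⟩
  case forth =>
    exact logicClosure_le (unfolding_R_le_invImage a)
      (fun hD => (hM a .D hD).unfolding_serial)
      (fun c hc hcD => (hM a c hc).invImage hcD _) u v hv
  case back => exact le_logicClosure (L a) u _ (unfolding_R_extendPath u ht)
end

section
/- For every set W and every euclidean binary relation R on W, the transitive closure of R is euclidean. -/
/-! Any two `R⁺`-successors of a point are already `R`-related. Since every `R`-successor `t` of
a point satisfies `R t t`, euclideanness lets an `R`-edge out of `s` be pushed along any
`R`-path starting at `s`. -/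

/-- A relation is euclidean when s R t and s R r imply t R r. -/
def Euclidean {W : Type} (R : W → W → Prop) : Prop :=
  ∀ s t r : W, R s t → R s r → R t r

namespace Euclidean

variable {W : Type} {R : W → W → Prop}

theorem rel_of_rel_of_transGen (h : Euclidean R) {s t r : W} (hst : R s t)
    (hsr : Relation.TransGen R s r) : R t r := by
  induction hsr with
  | single hsr => exact h s t _ hst hsr
  | tail _ hbr ihtb =>
    have htt : R t t := h s t t hst hst
    exact h _ t _ (h t _ t ihtb htt) hbr

theorem rel_of_transGen_of_transGen (h : Euclidean R) {s t r : W}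
    (hst : Relation.TransGen R s t) (hsr : Relation.TransGen R s r) : R t r := by
  induction hst with
  | single hst => exact h.rel_of_rel_of_transGen hst hsr
  | tail _ hbt ihbr => exact h _ _ r hbt ihbr

end Euclidean

/-- the transitive closure of a euclidean relation is euclidean. -/
theorem transClosure_euclidean (W : Type) (R : W → W → Prop) (h : Euclidean R) :
    Euclidean (Relation.TransGen R) :=
  fun _ _ _ hst hsr => Relation.TransGen.single (h.rel_of_transGen_of_transGen hst hsr)
end
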